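/- arXiv:1212.3049 — 2 statements merged into one kernel-verified Lean document; each statement's English description precedes it below -/
import Mathlib

section
/- Let (X, μ) be a probability space with a measure-preserving R × Z action R, and suppose A ⊆ X is a measurable set Borel-isomorphic to Y × [−T, T] × {−N, …, N} (carrying measure ν ⊗ Lebesgue ⊗ counting) such that R_{(t,n)}(y, s, m) = (y, s + t, m + n) whenever |s|, |s+t| ≤ T and |m|, |m+n| ≤ N, and μ(X \ A) ≤ ε. Fix p ∈ R and define u : X → C by u(y, s, m) = e^{ips} on A and u = 1 off A. Then for every t with |t| ≤ n₀ (where n₀ ≤ T), ∫ |u ∘ R_{(t,0)}^{-1} − e^{−ipt} u|² dμ ≤ 4(ε + n₀/T). -/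
open scoped Classical

open MeasureTheory

/-!
On the core `{x ∈ A | |s x| ≤ T - n₀}` of the tower the flow only translates the coordinate
`s`, so `u ∘ σ_{-t} = e^{-ipt} u` there exactly. Elsewhere the integrand is at most `4`, as `u`
is unimodular. The complement of the core lies in `Aᶜ` together with two strips of width `n₀`
at the ends of the tower, each of measure at most `n₀ / 2T`.
-/

lemma norm_sub_sq_le_four {E : Type*} [SeminormedAddCommGroup E] {a b : E}
    (ha : ‖a‖ ≤ 1) (hb : ‖b‖ ≤ 1) : ‖a - b‖ ^ 2 ≤ 4 := by
  have h : ‖a - b‖ ≤ 2 := (norm_sub_le a b).trans (by linarith)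
  nlinarith [norm_nonneg (a - b)]

lemma lintegral_le_mul_measure_compl {X : Type*} [MeasurableSpace X] (μ : Measure X)
    {f : X → ENNReal} {c : ENNReal} {G : Set X}
    (hle : ∀ x, f x ≤ c) (hzero : ∀ x ∈ G, f x = 0) :
    ∫⁻ x, f x ∂μ ≤ c * μ Gᶜ :=
  calc ∫⁻ x, f x ∂μ ≤ ∫⁻ x, Gᶜ.indicator (fun _ => c) x ∂μ := lintegral_mono fun x => by
        by_cases hx : x ∈ G
        · simp [hzero x hx]
        · simp [hx, hle x]
    _ ≤ c * μ Gᶜ := lintegral_indicator_const_le _ _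

section Tower

variable {X : Type*} (A : Set X) (s : X → ℝ) (T : ℝ)

def towerCore (r : ℝ) : Set X := {x ∈ A | |s x| ≤ T - r}

variable {A s T}

lemma compl_towerCore_subset (hsA : ∀ x ∈ A, |s x| ≤ T) (r : ℝ) :
    (towerCore A s T r)ᶜ ⊆
      Aᶜ ∪ ({x ∈ A | s x ∈ Set.Icc (T - r) T} ∪ {x ∈ A | s x ∈ Set.Icc (-T) (-(T - r))}) := by
  intro x hx
  by_cases hxA : x ∈ A
  · have hsx := abs_le.mp (hsA x hxA)
    rcases lt_abs.mp (not_le.mp fun h => hx ⟨hxA, h⟩) with h | h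
    · exact .inr (.inl ⟨hxA, h.le, hsx.2⟩)
    · exact .inr (.inr ⟨hxA, hsx.1, by linarith⟩)
  · exact .inl hxA

lemma measure_compl_towerCore_le [MeasurableSpace X] (μ : Measure X)
    (hsA : ∀ x ∈ A, |s x| ≤ T)
    (hstrip : ∀ a b : ℝ, a ≤ b →
      μ {x ∈ A | s x ∈ Set.Icc a b} ≤ ENNReal.ofReal ((b - a) / (2 * T)))
    {r : ℝ} (hr : 0 ≤ r) (hT : 0 < T) :
    μ (towerCore A s T r)ᶜ ≤ μ Aᶜ + ENNReal.ofReal (r / T) := by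
  have hupper := hstrip (T - r) T (by linarith)
  have hlower := hstrip (-T) (-(T - r)) (by linarith)
  rw [sub_sub_cancel] at hupper
  rw [neg_sub_neg, sub_sub_cancel] at hlower
  have hhalves : r / T = r / (2 * T) + r / (2 * T) := by ring
  calc μ (towerCore A s T r)ᶜ
      ≤ μ Aᶜ + (μ {x ∈ A | s x ∈ Set.Icc (T - r) T}
          + μ {x ∈ A | s x ∈ Set.Icc (-T) (-(T - r))}) :=
        (measure_mono (compl_towerCore_subset hsA r)).trans
          ((measure_union_le _ _).trans (add_le_add_right (measure_union_le _ _) _))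
    _ ≤ μ Aᶜ + ENNReal.ofReal (r / T) := by
        rw [hhalves, ENNReal.ofReal_add (by positivity) (by positivity)]
        gcongr

variable {σ : ℝ → X → X} {p : ℝ} {u : X → ℂ}

lemma norm_towerPhase_eq_one
    (hu : ∀ x, u x = if x ∈ A then Complex.exp (Complex.I * p * s x) else 1) (x : X) :
    ‖u x‖ = 1 := by
  rw [hu x]
  split_ifs
  · simpa [mul_assoc] using Complex.norm_exp_I_mul_ofReal (p * s x)
  · exact norm_one

lemma towerPhase_flow_of_mem_towerCore
    (hequi : ∀ (t : ℝ), ∀ x ∈ A, |s x + t| ≤ T → σ t x ∈ A ∧ s (σ t x) = s x + t)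
    (hu : ∀ x, u x = if x ∈ A then Complex.exp (Complex.I * p * s x) else 1)
    {r t : ℝ} (ht : |t| ≤ r) {x : X} (hx : x ∈ towerCore A s T r) :
    u (σ (-t) x) = Complex.exp (-(Complex.I * p * t)) * u x := by
  have hshift : |s x + -t| ≤ T := by
    have := abs_add_le (s x) (-t)
    rw [abs_neg] at this
    linarith [hx.2]
  obtain ⟨hmem, hs_shift⟩ := hequi (-t) x hx.1 hshift
  rw [hu, if_pos hmem, hs_shift, hu, if_pos hx.1, ← Complex.exp_add]
  push_cast
  ring_nf

end Tower

theorem stmt9_general {X : Type*} [MeasurableSpace X] (μ : Measure X)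
    (σ : ℝ → X → X)
    (A : Set X)
    (T ε n₀ : ℝ) (hT : 0 < T) (hε : 0 ≤ ε)
    (hAc : μ Aᶜ ≤ ENNReal.ofReal ε)
    (s : X → ℝ)
    (hsA : ∀ x ∈ A, |s x| ≤ T)
    (hequi : ∀ (t : ℝ), ∀ x ∈ A, |s x + t| ≤ T → σ t x ∈ A ∧ s (σ t x) = s x + t)
    (hstrip : ∀ a b : ℝ, a ≤ b →
      μ {x ∈ A | s x ∈ Set.Icc a b} ≤ ENNReal.ofReal ((b - a) / (2 * T)))
    (p : ℝ) (u : X → ℂ)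
    (hu : ∀ x, u x = if x ∈ A then Complex.exp (Complex.I * p * s x) else 1) :
    ∀ t : ℝ, |t| ≤ n₀ →
      ∫⁻ x, ENNReal.ofReal
          (‖u (σ (-t) x) - Complex.exp (-(Complex.I * p * t)) * u x‖ ^ 2) ∂μ
        ≤ ENNReal.ofReal (4 * (ε + n₀ / T)) := by
  intro t ht
  have hn₀ : 0 ≤ n₀ := (abs_nonneg t).trans ht
  have hbound : ∀ x, ENNReal.ofReal
      (‖u (σ (-t) x) - Complex.exp (-(Complex.I * p * t)) * u x‖ ^ 2) ≤ 4 := fun x => by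
    rw [← ENNReal.ofReal_ofNat 4]
    refine ENNReal.ofReal_le_ofReal (norm_sub_sq_le_four ?_ ?_)
    · rw [norm_towerPhase_eq_one hu]
    · rw [norm_mul, norm_towerPhase_eq_one hu, mul_one, neg_mul_eq_mul_neg, ← Complex.ofReal_neg,
        mul_assoc, ← Complex.ofReal_mul, Complex.norm_exp_I_mul_ofReal]
  calc _ ≤ 4 * μ (towerCore A s T n₀)ᶜ :=
        lintegral_le_mul_measure_compl μ hbound fun x hx => by
          simp [towerPhase_flow_of_mem_towerCore hequi hu ht hx]
    _ ≤ 4 * (ENNReal.ofReal ε + ENNReal.ofReal (n₀ / T)) := by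
        gcongr
        exact (measure_compl_towerCore_le μ hsA hstrip hn₀ hT).trans
          (add_le_add_left hAc _)
    _ = ENNReal.ofReal (4 * (ε + n₀ / T)) := by
        rw [← ENNReal.ofReal_add hε (div_nonneg hn₀ hT.le), ← ENNReal.ofReal_ofNat 4,
          ← ENNReal.ofReal_mul (by norm_num)]

/-- The key Rohlin-tower estimate in the flow direction: if `A` is a Rohlin tower
for the `ℝ`-direction of an `ℝ × ℤ` action (encoded by the flow `σ_t = R_{(t,0)}`,
the `[−T,T]`-coordinate `s`, the equivariance on `A`, and the uniform distribution
of `s` over `[−T,T]`), `μ(Aᶜ) ≤ ε`, and `u = e^{ips}` on `A`, `u = 1` off `A`, then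
for `|t| ≤ n₀ ≤ T` one has `∫ |u ∘ R_{(t,0)}⁻¹ − e^{−ipt}u|² dμ ≤ 4(ε + n₀/T)`. -/
theorem stmt9 {X : Type*} [MeasurableSpace X] (μ : Measure X) [IsProbabilityMeasure μ]
    (σ : ℝ → X → X) (hσ : ∀ t, MeasurePreserving (σ t) μ μ)
    (hσ0 : ∀ x, σ 0 x = x) (hσadd : ∀ s t x, σ (s + t) x = σ s (σ t x))
    (A : Set X) (hA : MeasurableSet A)
    (T ε n₀ : ℝ) (hT : 0 < T) (hε : 0 ≤ ε) (hn₀ : 0 ≤ n₀) (hn₀T : n₀ ≤ T)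
    (hAc : μ Aᶜ ≤ ENNReal.ofReal ε)
    (s : X → ℝ) (hs : Measurable s)
    (hsA : ∀ x ∈ A, |s x| ≤ T)
    (hequi : ∀ (t : ℝ), ∀ x ∈ A, |s x + t| ≤ T → σ t x ∈ A ∧ s (σ t x) = s x + t)
    (hstrip : ∀ a b : ℝ, a ≤ b →
      μ {x ∈ A | s x ∈ Set.Icc a b} ≤ ENNReal.ofReal ((b - a) / (2 * T)))
    (p : ℝ) (u : X → ℂ)
    (hu : ∀ x, u x = if x ∈ A then Complex.exp (Complex.I * p * s x) else 1) :
    ∀ t : ℝ, |t| ≤ n₀ →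
      ∫⁻ x, ENNReal.ofReal
          (‖u (σ (-t) x) - Complex.exp (-(Complex.I * p * t)) * u x‖ ^ 2) ∂μ
        ≤ ENNReal.ofReal (4 * (ε + n₀ / T)) :=
  stmt9_general μ σ A T ε n₀ hT hε hAc s hsA hequi hstrip p u hu
end

section
/- Let p, q ∈ R with (p, q) ≠ r·(n/√2 − m, n/√3 − l) for every r ∈ R and n, m, l ∈ Z with (n, m, l) giving a nonzero vector. Then for all (t, n) ∈ (R × Z) \ {(0,0)}, it is not the case that both pt − n/√2 ∈ Z and qt − n/√3 ∈ Z. -/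
/-! If `t = 0`, then `n / √2` would be an integer with `n ≠ 0`, contradicting the irrationality
of `√2`. If `t ≠ 0`, the two relations say `(p, q) = t⁻¹ • (n/√2 + m, n/√3 + l)`, which the
hypothesis excludes unless `n = m = l = 0`; but then `p = q = 0 = 0 • (1/√2, 1/√3)`, which is
excluded as well. -/

theorem Irrational.eq_zero_of_intCast_div_eq_intCast {x : ℝ} (hx : Irrational x) {n k : ℤ}
    (h : (n : ℝ) / x = k) : n = 0 := by
  have hnk : (n : ℝ) = k * x := by rw [← h, div_mul_cancel₀ _ hx.ne_zero]
  by_contra hn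
  have hk : k ≠ 0 := by rintro rfl; simp [hn] at hnk
  exact (hx.intCast_mul hk).ne_int n hnk.symm

/-- If `(p, q) ≠ r·(n/√2 − m, n/√3 − l)` for every real `r` and integers `(n, m, l) ≠ 0`,
then for every `(t, n) ∈ (ℝ × ℤ) \ {(0,0)}` it is not the case that both
`pt − n/√2 ∈ ℤ` and `qt − n/√3 ∈ ℤ`. -/
theorem stmt14 (p q : ℝ)
    (h : ∀ (r : ℝ) (n m l : ℤ), ¬(n = 0 ∧ m = 0 ∧ l = 0) →
      (p, q) ≠ (r * ((n : ℝ) / Real.sqrt 2 - (m : ℝ)),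
                r * ((n : ℝ) / Real.sqrt 3 - (l : ℝ)))) :
    ∀ (t : ℝ) (n : ℤ), ¬(t = 0 ∧ n = 0) →
      ¬((∃ m : ℤ, p * t - (n : ℝ) / Real.sqrt 2 = (m : ℝ)) ∧
        (∃ l : ℤ, q * t - (n : ℝ) / Real.sqrt 3 = (l : ℝ))) := by
  rintro t n hnz ⟨⟨m, hm⟩, ⟨l, hl⟩⟩
  rcases eq_or_ne t 0 with rfl | ht
  · refine hnz ⟨rfl, irrational_sqrt_two.eq_zero_of_intCast_div_eq_intCast (k := -m) ?_⟩
    push_cast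
    linarith
  by_cases hzero : n = 0 ∧ m = 0 ∧ l = 0
  · obtain ⟨rfl, rfl, rfl⟩ := hzero
    simp only [Int.cast_zero, zero_div, sub_zero, mul_eq_zero, ht, or_false] at hm hl
    exact h 0 1 0 0 (by simp) (by simp [hm, hl])
  · refine h t⁻¹ n (-m) (-l) (by simpa using hzero) (Prod.ext ?_ ?_)
    · push_cast
      rw [← hm]
      field_simp
      ring
    · push_cast
      rw [← hl]
      field_simp
      ring
end
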